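/- Let X be a smooth projective surface, D a 0-connected effective divisor with K_X + D nef, and C an irreducible component of the support of D. Then the arithmetic genus of C satisfies p_a(C) ≤ p_a(D). -/

import Mathlib

/-- Abstract divisor theory of a smooth complex projective surface:
the group of divisors, intersection pairing, canonical divisor, prime/effective
divisors, pseudoeffectivity, nefness, cohomology dimensions `h0`, the
irregularity `q = h¹(X, O_X)`, and linear equivalence, together with their
basic properties. -/
structure Surface where
  /-- the group of (integral) divisors on the surface -/
  Div : Type
  [divGrp : AddCommGroup Div]
  /-- the intersection pairing -/
  inter : Div → Div → ℤ
  inter_symm : ∀ D E, inter D E = inter E D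
  inter_add_left : ∀ D E F, inter (D + E) F = inter D F + inter E F
  /-- the canonical divisor `K_X` -/
  K : Div
  /-- prime divisors (irreducible curves) -/
  Prime : Div → Prop
  /-- effective divisors (nonnegative integral combinations of prime divisors) -/
  Effective : Div → Prop
  effective_zero : Effective 0
  effective_add : ∀ {D E}, Effective D → Effective E → Effective (D + E)
  prime_effective : ∀ {C}, Prime C → Effective C
  prime_ne_zero : ∀ {C}, Prime C → C ≠ 0
  effective_sum_primes : ∀ {D}, Effective D → D ≠ 0 → ∃ C, Prime C ∧ Effective (D - C)
  /-- pseudoeffective divisors: classes in the closure of the effective cone -/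
  Pseudoeffective : Div → Prop
  effective_pseudoeffective : ∀ {D}, Effective D → Pseudoeffective D
  pseudoeffective_add : ∀ {D E}, Pseudoeffective D → Pseudoeffective E → Pseudoeffective (D + E)
  pseudoeffective_smul : ∀ {D} (n : ℕ), Pseudoeffective D → Pseudoeffective (n • D)
  /-- nef divisors -/
  Nef : Div → Prop
  nef_iff : ∀ D, Nef D ↔ ∀ C, Prime C → 0 ≤ inter D C
  nef_inter_pseudoeffective : ∀ {D E}, Nef D → Pseudoeffective E → 0 ≤ inter D E
  /-- `h0 D = dim H⁰(X, O_X(D))` -/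
  h0 : Div → ℕ
  /-- the irregularity `q = h¹(X, O_X)` -/
  q : ℕ
  /-- linear equivalence of divisors -/
  LinEquiv : Div → Div → Prop
  h0_pos_iff : ∀ D, 0 < h0 D ↔ ∃ E, Effective E ∧ LinEquiv D E

attribute [instance] Surface.divGrp

namespace Surface

variable (S : Surface)

/-- numerical equivalence of divisors -/
def NumEquiv (D E : S.Div) : Prop := ∀ C, S.Prime C → S.inter D C = S.inter E C

/-- numerically trivial divisors -/
def NumTrivial (D : S.Div) : Prop := S.NumEquiv D 0

/-- the arithmetic genus of a divisor, defined by adjunction: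
`2 p_a(D) - 2 = (K_X + D).D` -/
def pa (D : S.Div) : ℚ := 1 + (S.inter (S.K + D) D : ℚ) / 2

/-- an effective divisor `D` is `0`-connected if every decomposition
`D = D₁ + D₂` into nonzero effective divisors satisfies `D₁.D₂ ≥ 0` -/
def ZeroConnected (D : S.Div) : Prop :=
  S.Effective D ∧ ∀ D₁ D₂, S.Effective D₁ → S.Effective D₂ → D₁ ≠ 0 → D₂ ≠ 0 →
    D = D₁ + D₂ → 0 ≤ S.inter D₁ D₂

/-- `C` is an irreducible component of (the support of) the effective divisor `D` -/
def IsComponent (C D : S.Div) : Prop := S.Prime C ∧ S.Effective (D - C)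

/-- a reduced effective divisor: a sum of finitely many distinct prime divisors -/
def Reduced (D : S.Div) : Prop :=
  ∃ s : Finset S.Div, (∀ C ∈ s, S.Prime C) ∧ D = s.sum id

/-- some positive multiple of `D` is (linearly equivalent to) an effective divisor -/
def MultipleEffective (D : S.Div) : Prop := ∃ m : ℕ, 0 < m ∧ 0 < S.h0 (m • D)

end Surface

/-- A smooth projective ruled surface: a surface together with the class `F` of a
fiber of the ruling `π : X → B`, satisfying `F² = 0` and `K_X.F = -2`, and the
notion of a curve being contained in a fiber of `π`; the irregularity `q` equals
the genus of the base curve `B`. -/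
structure RuledSurface extends Surface where
  /-- the class of a fiber of the ruling -/
  F : Div
  F_prime : Prime F
  F_sq : inter F F = 0
  K_inter_F : inter K F = -2
  /-- the prime divisors contained in a fiber of the ruling -/
  InFiber : Div → Prop
  inFiber_inter_F : ∀ {C}, Prime C → InFiber C → inter C F = 0

namespace Surface

variable (S : Surface)

theorem inter_add_right (A B E : S.Div) : S.inter A (B + E) = S.inter A B + S.inter A E := by
  rw [S.inter_symm, S.inter_add_left, S.inter_symm B, S.inter_symm E]

theorem inter_sub_left (A B E : S.Div) : S.inter (A - B) E = S.inter A E - S.inter B E := by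
  have h := S.inter_add_left (A - B) B E
  rw [sub_add_cancel] at h
  omega

theorem inter_zero_left (E : S.Div) : S.inter 0 E = 0 := by
  simpa using S.inter_sub_left 0 0 E

theorem inter_canonical_add_self_eq (C D : S.Div) :
    S.inter (S.K + D) D = S.inter (S.K + C) C + S.inter (D - C) C + S.inter (S.K + D) (D - C) := by
  have hD : S.inter (S.K + D) D = S.inter (S.K + D) C + S.inter (S.K + D) (D - C) := by
    rw [← inter_add_right, add_sub_cancel]
  have hC : S.inter (S.K + D) C = S.inter (S.K + C) C + S.inter (D - C) C := by
    rw [← inter_add_left, add_add_sub_cancel]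
  rw [hD, hC]

theorem pa_le_pa_iff (C D : S.Div) :
    S.pa C ≤ S.pa D ↔ S.inter (S.K + C) C ≤ S.inter (S.K + D) D := by
  rw [pa, pa, add_le_add_iff_left, div_le_div_iff_of_pos_right two_pos, Int.cast_le]

variable {S}

theorem Nef.inter_nonneg_of_effective {L E : S.Div} (hL : S.Nef L) (hE : S.Effective E) :
    0 ≤ S.inter L E :=
  S.nef_inter_pseudoeffective hL (S.effective_pseudoeffective hE)

theorem ZeroConnected.inter_sub_nonneg {D E : S.Div} (hD : S.ZeroConnected D)
    (hE : S.Effective E) (hE0 : E ≠ 0) (hDE : S.Effective (D - E)) :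
    0 ≤ S.inter (D - E) E := by
  by_cases h : D - E = 0
  · rw [h, inter_zero_left]
  · exact hD.2 (D - E) E hDE hE h hE0 (sub_add_cancel D E).symm

end Surface

/-- Let `X` be a smooth projective surface, `D` a `0`-connected effective divisor
with `K_X + D` nef and `C` an irreducible component of the support of `D`. Then
`p_a(C) ≤ p_a(D)`. -/
theorem component_genus_le (S : Surface) (D C : S.Div)
    (hD : S.ZeroConnected D) (hKD : S.Nef (S.K + D)) (hC : S.IsComponent C D) :
    S.pa C ≤ S.pa D := by
  obtain ⟨hCprime, hDC⟩ := hC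
  have hconn : 0 ≤ S.inter (D - C) C :=
    hD.inter_sub_nonneg (S.prime_effective hCprime) (S.prime_ne_zero hCprime) hDC
  have hnef : 0 ≤ S.inter (S.K + D) (D - C) := hKD.inter_nonneg_of_effective hDC
  rw [S.pa_le_pa_iff, S.inter_canonical_add_self_eq C D]
  omega
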